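/- arXiv:1804.05278 — 5 statements merged into one kernel-verified Lean document; each statement's English description precedes it below -/
import Mathlib

section
/- Let V be a complex Hilbert space, Ω ⊆ ℂ a connected open set, and H, K : Ω → GL(V) holomorphic maps with H(z)*H(z) = K(z)*K(z) for all z ∈ Ω. Then there exists a unitary operator U on V such that H(z) = U K(z) for all z ∈ Ω. -/
/-!
Since `H*H = K*K`, each `U(z) = H(z) K(z)⁻¹` is an invertible isometry, i.e. unitary. The map
`z ↦ U(z) x` is holomorphic with constant norm `‖x‖`, so by the maximum modulus principle in the
strictly convex space `V` it is constant on the connected set `Ω`.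
-/

open ContinuousLinearMap Set
open scoped Ring

theorem star_mul_self_mul_inverse_eq_one {R : Type*} [MonoidWithZero R] [StarMul R] {a b : R}
    (hb : IsUnit b) (h : star a * a = star b * b) : star (a * b⁻¹ʳ) * (a * b⁻¹ʳ) = 1 :=
  calc star (a * b⁻¹ʳ) * (a * b⁻¹ʳ) = star b⁻¹ʳ * (star a * a) * b⁻¹ʳ := by
        simp only [star_mul, mul_assoc]
    _ = star (b * b⁻¹ʳ) * (b * b⁻¹ʳ) := by rw [h]; simp only [star_mul, mul_assoc]
    _ = 1 := by rw [Ring.mul_inverse_cancel b hb, star_one, one_mul]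

theorem eqOn_const_of_differentiableOn_of_norm_map {E F : Type*} [NormedAddCommGroup E]
    [NormedSpace ℂ E] [NormedAddCommGroup F] [NormedSpace ℂ F] [StrictConvexSpace ℝ F]
    {U : ℂ → E →L[ℂ] F} {Ω : Set ℂ} {z₀ : ℂ} (hΩ : IsOpen Ω) (hconn : IsPreconnected Ω)
    (hU : DifferentiableOn ℂ U Ω) (hnorm : ∀ z ∈ Ω, ∀ x, ‖U z x‖ = ‖x‖) (hz₀ : z₀ ∈ Ω) :
    EqOn U (Function.const ℂ (U z₀)) Ω := by
  intro z hz
  ext x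
  have hmax : IsMaxOn (norm ∘ fun w => U w x) Ω z₀ :=
    isMaxOn_iff.mpr fun w hw => ((hnorm w hw x).trans (hnorm z₀ hz₀ x).symm).le
  exact Complex.eqOn_of_isPreconnected_of_isMaxOn_norm hconn hΩ
    (hU.clm_apply (differentiableOn_const x)) hz₀ hmax hz

theorem stmt1
    {V : Type*} [NormedAddCommGroup V] [InnerProductSpace ℂ V] [CompleteSpace V]
    (Ω : Set ℂ) (hΩ : IsOpen Ω) (hconn : IsConnected Ω)
    (H K : ℂ → (V →L[ℂ] V))
    (hH : DifferentiableOn ℂ H Ω) (hK : DifferentiableOn ℂ K Ω)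
    (hHinv : ∀ z ∈ Ω, IsUnit (H z)) (hKinv : ∀ z ∈ Ω, IsUnit (K z))
    (hfac : ∀ z ∈ Ω,
      ContinuousLinearMap.adjoint (H z) * H z = ContinuousLinearMap.adjoint (K z) * K z) :
    ∃ U ∈ unitary (V →L[ℂ] V), ∀ z ∈ Ω, H z = U * K z := by
  let _ : InnerProductSpace ℝ V := InnerProductSpace.complexToReal
  obtain ⟨z₀, hz₀⟩ := hconn.nonempty
  set U : ℂ → (V →L[ℂ] V) := fun z => H z * (K z)⁻¹ʳ
  have hiso : ∀ z ∈ Ω, star (U z) * U z = 1 := fun z hz =>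
    star_mul_self_mul_inverse_eq_one (hKinv z hz) (by simpa only [star_eq_adjoint] using hfac z hz)
  have hconst : EqOn U (Function.const ℂ (U z₀)) Ω :=
    eqOn_const_of_differentiableOn_of_norm_map hΩ hconn.isPreconnected (hH.mul (hK.inverse hKinv))
      (fun z hz => (U z).norm_map_iff_adjoint_comp_self.mpr (hiso z hz)) hz₀
  have hunit : IsUnit (U z₀) := (hHinv z₀ hz₀).mul (isUnit_ringInverse.mpr (hKinv z₀ hz₀))
  refine ⟨U z₀, hunit.mem_unitary_of_star_mul_self (hiso z₀ hz₀), fun z hz => ?_⟩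
  calc H z = U z * K z := by rw [mul_assoc, Ring.inverse_mul_cancel _ (hKinv z hz), mul_one]
    _ = U z₀ * K z := congrArg (· * K z) (hconst hz)
end

section
/- Let V be a complex Hilbert space, S the strip {z ∈ ℂ : a < Im z < b}, and H : S → GL(V) holomorphic with H(z+1)*H(z+1) = H(z)*H(z) for all z ∈ S. Then U := H(z+1) H(z)⁻¹ is independent of z and is a unitary operator. -/
open Complex ContinuousLinearMap

theorem stmt3
    {V : Type*} [NormedAddCommGroup V] [InnerProductSpace ℂ V] [CompleteSpace V]
    (a b : ℝ) (hab : a < b)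
    (S : Set ℂ) (hS : S = {z : ℂ | a < z.im ∧ z.im < b})
    (H : ℂ → (V →L[ℂ] V))
    (hH : DifferentiableOn ℂ H S)
    (hHinv : ∀ z ∈ S, IsUnit (H z))
    (hper : ∀ z ∈ S,
      ContinuousLinearMap.adjoint (H (z + 1)) * H (z + 1)
        = ContinuousLinearMap.adjoint (H z) * H z) :
    ∃ U ∈ unitary (V →L[ℂ] V), ∀ z ∈ S, H (z + 1) * Ring.inverse (H z) = U := by
  -- basic facts about S
  have hSopen : IsOpen S := by
    rw [hS]
    have : {z : ℂ | a < z.im ∧ z.im < b} = Complex.im ⁻¹' Set.Ioo a b := by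
      ext z; simp [Set.mem_Ioo]
    rw [this]
    exact isOpen_Ioo.preimage Complex.continuous_im
  have hSconv : Convex ℝ S := by
    rw [hS]
    have : {z : ℂ | a < z.im ∧ z.im < b} = Complex.imLm ⁻¹' Set.Ioo a b := by
      ext z; simp [Set.mem_Ioo]
    rw [this]
    exact (convex_Ioo a b).linear_preimage _
  have hshift : ∀ z ∈ S, z + 1 ∈ S := by
    intro z hz
    rw [hS] at hz ⊢
    simpa using hz
  -- rewrite hper with star
  have hper' : ∀ z ∈ S, star (H (z + 1)) * H (z + 1) = star (H z) * H z := by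
    intro z hz
    simpa [ContinuousLinearMap.star_eq_adjoint] using hper z hz
  set F : ℂ → (V →L[ℂ] V) := fun z => H (z + 1) * Ring.inverse (H z) with hF
  set G : ℂ → (V →L[ℂ] V) := fun z => H z * Ring.inverse (H (z + 1)) with hG
  -- F = star ∘ G on S
  have hstar : ∀ z ∈ S, F z = star (G z) := by
    intro z hz
    have hA : IsUnit (H (z + 1)) := hHinv _ (hshift z hz)
    have hB : IsUnit (H z) := hHinv z hz
    have hsA : IsUnit (star (H (z + 1))) := hA.star
    have : star (G z) = Ring.inverse (star (H (z + 1))) * star (H z) := by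
      simp [hG, star_mul, Ring.inverse_star]
    rw [this]
    have key : star (H (z + 1)) * F z = star (H z) := by
      show star (H (z + 1)) * (H (z + 1) * Ring.inverse (H z)) = star (H z)
      rw [← mul_assoc, hper' z hz, mul_assoc, Ring.mul_inverse_cancel _ hB, mul_one]
    have key2 : star (H (z + 1)) * (Ring.inverse (star (H (z + 1))) * star (H z))
        = star (H z) := by
      rw [← mul_assoc, Ring.mul_inverse_cancel _ hsA, one_mul]
    exact hsA.mul_left_cancel (key.trans key2.symm)
  -- differentiability
  have hdF : ∀ z ∈ S, DifferentiableAt ℂ F z := by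
    intro z hz
    have h1 : DifferentiableAt ℂ (fun w => H (w + 1)) z := by
      have := (hH.differentiableAt (hSopen.mem_nhds (hshift z hz)))
      exact this.comp z ((differentiableAt_id).add_const 1)
    have h2 : DifferentiableAt ℂ (fun w => Ring.inverse (H w)) z :=
      (hH.differentiableAt (hSopen.mem_nhds hz)).inverse (hHinv z hz)
    exact h1.mul h2
  have hdG : ∀ z ∈ S, DifferentiableAt ℂ G z := by
    intro z hz
    have h1 : DifferentiableAt ℂ (fun w => H (w + 1)) z := by
      have := (hH.differentiableAt (hSopen.mem_nhds (hshift z hz)))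
      exact this.comp z ((differentiableAt_id).add_const 1)
    have h2 : DifferentiableAt ℂ (fun w => Ring.inverse (H (w + 1))) z :=
      h1.inverse (hHinv _ (hshift z hz))
    exact (hH.differentiableAt (hSopen.mem_nhds hz)).mul h2
  -- derivative of F is zero on S
  have hzero : ∀ z ∈ S, fderivWithin ℂ F S z = 0 := by
    intro z hz
    rw [fderivWithin_of_isOpen hSopen hz]
    have heq : F =ᶠ[nhds z] (starL' ℝ : (V →L[ℂ] V) ≃L[ℝ] (V →L[ℂ] V)) ∘ G := by
      filter_upwards [hSopen.mem_nhds hz] with w hw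
      exact hstar w hw
    have hreal : fderiv ℝ F z = fderiv ℝ ((starL' ℝ : (V →L[ℂ] V) ≃L[ℝ] (V →L[ℂ] V)) ∘ G) z :=
      heq.fderiv_eq
    rw [ContinuousLinearEquiv.comp_fderiv] at hreal
    have hFr : fderiv ℝ F z = (fderiv ℂ F z).restrictScalars ℝ :=
      (hdF z hz).fderiv_restrictScalars ℝ
    have hGr : fderiv ℝ G z = (fderiv ℂ G z).restrictScalars ℝ :=
      (hdG z hz).fderiv_restrictScalars ℝ
    rw [hFr, hGr] at hreal
    set f' := fderiv ℂ F z
    set g' := fderiv ℂ G z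
    have h1 : f' 1 = star (g' 1) := by
      have := congrArg (fun T => T 1) hreal
      simpa using this
    have hI : f' Complex.I = star (g' Complex.I) := by
      have := congrArg (fun T => T Complex.I) hreal
      simpa using this
    have e1 : f' Complex.I = Complex.I • f' 1 := by
      rw [← f'.map_smul]; norm_num
    have e2 : g' Complex.I = Complex.I • g' 1 := by
      rw [← g'.map_smul]; norm_num
    have : Complex.I • f' 1 = (-Complex.I) • star (g' 1) := by
      rw [← e1, hI, e2, star_smul]
      simp
    rw [h1] at this
    have hw0 : star (g' 1) = 0 := by
      have h2 : (Complex.I - (-Complex.I)) • star (g' 1) = 0 := by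
        rw [sub_smul, this, sub_self]
      have : (Complex.I - (-Complex.I)) ≠ 0 := by
        simp [Complex.ext_iff]
      exact (smul_eq_zero.mp h2).resolve_left this
    have hf1 : f' 1 = 0 := by rw [h1, hw0]
    refine ContinuousLinearMap.ext fun c => ?_
    have : f' c = c • f' 1 := by rw [← f'.map_smul, smul_eq_mul, mul_one]
    simp [this, hf1]
  -- F is constant on S
  have hdFOn : DifferentiableOn ℂ F S := fun z hz =>
    (hdF z hz).differentiableWithinAt
  -- pick a base point
  have hz₀ : (((a + b) / 2 : ℝ) : ℂ) * Complex.I ∈ S := by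
    rw [hS]
    constructor <;> simp <;> linarith
  refine ⟨F ((((a + b) / 2 : ℝ) : ℂ) * Complex.I), ?_, ?_⟩
  · -- unitarity
    set z₀ := (((a + b) / 2 : ℝ) : ℂ) * Complex.I
    have hA : IsUnit (H (z₀ + 1)) := hHinv _ (hshift z₀ hz₀)
    have hB : IsUnit (H z₀) := hHinv z₀ hz₀
    rw [Unitary.mem_iff]
    constructor
    · -- star U * U = 1
      show star (H (z₀ + 1) * Ring.inverse (H z₀)) * (H (z₀ + 1) * Ring.inverse (H z₀)) = 1
      rw [star_mul, ← Ring.inverse_star]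
      have mid : star (H (z₀ + 1)) * (H (z₀ + 1) * Ring.inverse (H z₀)) = star (H z₀) := by
        rw [← mul_assoc, hper' z₀ hz₀, mul_assoc, Ring.mul_inverse_cancel _ hB, mul_one]
      rw [mul_assoc, mid, Ring.inverse_mul_cancel _ hB.star]
    · -- U * star U = 1
      have hU : F z₀ = Ring.inverse (star (H (z₀ + 1))) * star (H z₀) := by
        rw [hstar z₀ hz₀]
        show star (H z₀ * Ring.inverse (H (z₀ + 1))) = _
        rw [star_mul, ← Ring.inverse_star]
      have hUs : star (F z₀) = H z₀ * Ring.inverse (H (z₀ + 1)) := by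
        rw [hU, star_mul, star_star, Ring.inverse_star, star_star]
      rw [hUs, hU]
      have mid : star (H z₀) * (H z₀ * Ring.inverse (H (z₀ + 1))) = star (H (z₀ + 1)) := by
        rw [← mul_assoc, ← hper' z₀ hz₀, mul_assoc, Ring.mul_inverse_cancel _ hA, mul_one]
      rw [mul_assoc, mid, Ring.inverse_mul_cancel _ hA.star]
  · intro z hz
    exact hSconv.is_const_of_fderivWithin_eq_zero hdFOn hzero hz hz₀
end

section
/- Let V be a complex Hilbert space and P(z) ∈ End⁺(V) depend continuously (in operator norm) on z in a topological space M, and let h(z) be a continuous family of bounded self-adjoint operators. Then the function S(z) = sup{⟨h(z)v, v⟩ : ⟨P(z)v, v⟩ = 1} is continuous, being equal to sup over unit vectors u of ⟨P(z)^{-1/2} h(z) P(z)^{-1/2} u, u⟩. -/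
/-!
Normalising `v` to the unit sphere turns the constrained supremum into the supremum of the
generalised Rayleigh quotient `⟪h v, v⟫ / ⟪P v, v⟫` over unit vectors. This is possible because a
positive invertible `P` is coercive: writing `P = B⋆ B` with `B` invertible,
`⟪P v, v⟫ = ‖B v‖² ≥ ‖B⁻¹‖⁻² ‖v‖²`. Continuity in operator norm makes both quadratic forms
converge uniformly on the unit sphere; since the denominators stay bounded away from `0`, so does
the quotient, and suprema of uniformly convergent families converge.
-/

open ContinuousLinearMap Filter Topology Metric

section UniformSup

variable {α ι : Type*} {l : Filter ι} {s : Set α}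

theorem csSup_image_le_csSup_image_add {f g : α → ℝ} {ε : ℝ} (hs : s.Nonempty)
    (hg : BddAbove (g '' s)) (hfg : ∀ x ∈ s, f x ≤ g x + ε) :
    sSup (f '' s) ≤ sSup (g '' s) + ε := by
  refine csSup_le (hs.image f) ?_
  rintro _ ⟨x, hx, rfl⟩
  exact (hfg x hx).trans (by gcongr; exact le_csSup hg (Set.mem_image_of_mem g hx))

theorem TendstoUniformlyOn.tendsto_sSup_image {F : ι → α → ℝ} {f : α → ℝ}
    (hF : TendstoUniformlyOn F f l s) (hf : BddAbove (f '' s)) :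
    Tendsto (fun i => sSup (F i '' s)) l (𝓝 (sSup (f '' s))) := by
  rcases s.eq_empty_or_nonempty with rfl | hs
  · simpa using tendsto_const_nhds
  rw [Metric.tendsto_nhds]
  intro ε hε
  filter_upwards [Metric.tendstoUniformlyOn_iff.1 hF (ε / 2) (by positivity)] with i hi
  have hclose : ∀ x ∈ s, |F i x - f x| < ε / 2 := fun x hx => by
    rw [← Real.dist_eq, dist_comm]; exact hi x hx
  have hFf : ∀ x ∈ s, F i x ≤ f x + ε / 2 := fun x hx => by
    linarith [(abs_lt.1 (hclose x hx)).2]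
  have hfF : ∀ x ∈ s, f x ≤ F i x + ε / 2 := fun x hx => by
    linarith [(abs_lt.1 (hclose x hx)).1]
  have hFbdd : BddAbove (F i '' s) := by
    obtain ⟨b, hb⟩ := hf
    refine ⟨b + ε / 2, ?_⟩
    rintro _ ⟨x, hx, rfl⟩
    linarith [hFf x hx, hb (Set.mem_image_of_mem f hx)]
  rw [Real.dist_eq, abs_lt]
  constructor
  · linarith [csSup_image_le_csSup_image_add hs hFbdd hfF]
  · linarith [csSup_image_le_csSup_image_add hs hf hFf]

theorem TendstoUniformlyOn.div_of_abs_le_of_le {F G : ι → α → ℝ} {f g : α → ℝ} {R c : ℝ}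
    (hF : TendstoUniformlyOn F f l s) (hG : TendstoUniformlyOn G g l s)
    (hf : ∀ x ∈ s, |f x| ≤ R) (hc : 0 < c) (hg : ∀ x ∈ s, c ≤ g x) :
    TendstoUniformlyOn (fun i x => F i x / G i x) (fun x => f x / g x) l s := by
  rw [Metric.tendstoUniformlyOn_iff] at hF hG ⊢
  intro ε hε
  set δ := min (c / 2) (ε * c ^ 2 / (4 * (|R| + c)))
  have hδ : 0 < δ := lt_min (by positivity) (by positivity)
  have hδc : δ ≤ c / 2 := min_le_left _ _
  filter_upwards [hF δ hδ, hG δ hδ] with i hFi hGi x hx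
  specialize hFi x hx
  specialize hGi x hx
  rw [Real.dist_eq] at hFi hGi ⊢
  have hgx := hg x hx
  have hGx : c / 2 ≤ G i x := by
    linarith [(abs_lt.1 hGi).2]
  have hg0 : 0 < g x := hc.trans_le hgx
  have hG0 : 0 < G i x := (half_pos hc).trans_le hGx
  have hsplit : f x / g x - F i x / G i x
      = (f x - F i x) / G i x + f x * (G i x - g x) / (g x * G i x) := by
    field_simp
    ring
  calc |f x / g x - F i x / G i x|
      ≤ |f x - F i x| / G i x + |f x| * |G i x - g x| / (g x * G i x) := by
        rw [hsplit]
        refine (abs_add_le _ _).trans_eq ?_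
        rw [abs_div, abs_div, abs_mul, abs_of_pos hG0, abs_of_pos (mul_pos hg0 hG0)]
    _ ≤ δ / (c / 2) + |R| * δ / (c * (c / 2)) := by
        rw [abs_sub_comm (G i x)]
        have hfR : |f x| ≤ |R| := (hf x hx).trans (le_abs_self R)
        gcongr ?_ / ?_ + ?_ * ?_ / ?_
        exact mul_le_mul hgx hGx (by positivity) hg0.le
    _ = 2 * δ * (|R| + c) / c ^ 2 := by field_simp; ring
    _ ≤ 2 * (ε * c ^ 2 / (4 * (|R| + c))) * (|R| + c) / c ^ 2 := by
        gcongr; exact min_le_right _ _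
    _ < ε := by field_simp; linarith

end UniformSup

theorem IsStrictlyPositive.exists_pos_mul_norm_sq_le_reApplyInnerSelf {V : Type*}
    [NormedAddCommGroup V] [InnerProductSpace ℂ V] [CompleteSpace V] {T : V →L[ℂ] V}
    (hT : IsStrictlyPositive T) : ∃ c > 0, ∀ x, c * ‖x‖ ^ 2 ≤ T.reApplyInnerSelf x := by
  obtain ⟨_, ⟨B, rfl⟩, rfl⟩ := CStarAlgebra.isStrictlyPositive_iff_eq_star_mul_self.1 hT
  set K := ‖(↑B⁻¹ : V →L[ℂ] V)‖ + 1
  have hK : 0 < K := by positivity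
  refine ⟨K⁻¹ ^ 2, by positivity, fun x => ?_⟩
  have hx : ‖x‖ ≤ K * ‖(B : V →L[ℂ] V) x‖ :=
    calc ‖x‖ = ‖(↑B⁻¹ : V →L[ℂ] V) ((B : V →L[ℂ] V) x)‖ := by
          rw [← mul_apply_eq_comp, Units.inv_mul, one_apply_eq_self]
      _ ≤ ‖(↑B⁻¹ : V →L[ℂ] V)‖ * ‖(B : V →L[ℂ] V) x‖ := le_opNorm _ _
      _ ≤ K * ‖(B : V →L[ℂ] V) x‖ := by gcongr; linarith
  rw [reApplyInnerSelf_apply, mul_apply_eq_comp, star_eq_adjoint, adjoint_inner_left,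
    inner_self_eq_norm_sq, ← mul_pow]
  gcongr
  rwa [inv_mul_le_iff₀ hK]

section QuadraticForm

variable {𝕜 E ι : Type*} [RCLike 𝕜] [NormedAddCommGroup E] [InnerProductSpace 𝕜 E]
  {l : Filter ι}

theorem ContinuousLinearMap.abs_reApplyInnerSelf_le (T : E →L[𝕜] E) (x : E) :
    |T.reApplyInnerSelf x| ≤ ‖T‖ * ‖x‖ ^ 2 := by
  grw [reApplyInnerSelf_apply, RCLike.abs_re_le_norm, norm_inner_le_norm, le_opNorm, mul_assoc,
    ← sq]

theorem ContinuousLinearMap.reApplyInnerSelf_sub (S T : E →L[𝕜] E) (x : E) :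
    (S - T).reApplyInnerSelf x = S.reApplyInnerSelf x - T.reApplyInnerSelf x := by
  simp only [reApplyInnerSelf_apply, sub_apply, inner_sub_left, map_sub]

theorem tendstoUniformlyOn_reApplyInnerSelf {T : ι → E →L[𝕜] E} {T₀ : E →L[𝕜] E}
    (hT : Tendsto T l (𝓝 T₀)) (r : ℝ) :
    TendstoUniformlyOn (fun i => (T i).reApplyInnerSelf) T₀.reApplyInnerSelf l
      (closedBall 0 r) := by
  rw [Metric.tendstoUniformlyOn_iff]
  intro ε hε
  have hr : 0 < r ^ 2 + 1 := by positivity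
  filter_upwards [Metric.tendsto_nhds.1 hT (ε / (r ^ 2 + 1)) (by positivity)] with i hi x hx
  rw [mem_closedBall_zero_iff] at hx
  calc dist (T₀.reApplyInnerSelf x) ((T i).reApplyInnerSelf x)
      = |(T₀ - T i).reApplyInnerSelf x| := by rw [reApplyInnerSelf_sub, Real.dist_eq]
    _ ≤ dist (T i) T₀ * ‖x‖ ^ 2 := by
        rw [dist_comm, dist_eq_norm]; exact abs_reApplyInnerSelf_le _ _
    _ ≤ ε / (r ^ 2 + 1) * r ^ 2 := by gcongr
    _ < ε := by
        rw [div_mul_eq_mul_div, div_lt_iff₀ hr]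
        nlinarith

theorem image_sphere_div_reApplyInnerSelf {P T : E →L[𝕜] E}
    (hP : ∀ x, x ≠ 0 → 0 < P.reApplyInnerSelf x) :
    (fun x => T.reApplyInnerSelf x / P.reApplyInnerSelf x) '' sphere 0 1
      = {r | ∃ x, P.reApplyInnerSelf x = 1 ∧ r = T.reApplyInnerSelf x} := by
  ext r
  constructor
  · rintro ⟨x, hx, rfl⟩
    have hPx := hP x (ne_zero_of_mem_unit_sphere ⟨x, hx⟩)
    set t : ℝ := √(P.reApplyInnerSelf x)⁻¹
    have ht : ‖(t : 𝕜)‖ ^ 2 = (P.reApplyInnerSelf x)⁻¹ := by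
      rw [RCLike.norm_ofReal, sq_abs, Real.sq_sqrt (by positivity)]
    refine ⟨(t : 𝕜) • x, ?_, ?_⟩
    · rw [reApplyInnerSelf_smul, ht, inv_mul_cancel₀ hPx.ne']
    · rw [reApplyInnerSelf_smul, ht, inv_mul_eq_div]
  · rintro ⟨x, hx, rfl⟩
    have hx0 : x ≠ 0 := by
      rintro rfl
      simp [reApplyInnerSelf_apply] at hx
    refine ⟨((‖x‖⁻¹ : ℝ) : 𝕜) • x, ?_, ?_⟩
    · simp [norm_smul, hx0]
    · have : ‖((‖x‖⁻¹ : ℝ) : 𝕜)‖ ^ 2 ≠ 0 := by simp [hx0]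
      simp only [reApplyInnerSelf_smul, hx, mul_div_mul_left _ _ this, div_one]

theorem tendsto_sSup_image_sphere_div_reApplyInnerSelf {T P : ι → E →L[𝕜] E}
    {T₀ P₀ : E →L[𝕜] E} (hT : Tendsto T l (𝓝 T₀)) (hP : Tendsto P l (𝓝 P₀)) {c : ℝ}
    (hc : 0 < c) (hP₀ : ∀ x, c * ‖x‖ ^ 2 ≤ P₀.reApplyInnerSelf x) :
    Tendsto (fun i => sSup ((fun x => (T i).reApplyInnerSelf x / (P i).reApplyInnerSelf x) ''
        sphere 0 1)) l
      (𝓝 (sSup ((fun x => T₀.reApplyInnerSelf x / P₀.reApplyInnerSelf x) '' sphere 0 1))) := by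
  have hT₀ : ∀ x ∈ sphere (0 : E) 1, |T₀.reApplyInnerSelf x| ≤ ‖T₀‖ := fun x hx => by
    simpa [mem_sphere_zero_iff_norm.1 hx] using T₀.abs_reApplyInnerSelf_le x
  have hP₀' : ∀ x ∈ sphere (0 : E) 1, c ≤ P₀.reApplyInnerSelf x := fun x hx => by
    simpa [mem_sphere_zero_iff_norm.1 hx] using hP₀ x
  have hbdd : BddAbove ((fun x => T₀.reApplyInnerSelf x / P₀.reApplyInnerSelf x) ''
      sphere 0 1) := by
    refine ⟨‖T₀‖ / c, ?_⟩
    rintro _ ⟨x, hx, rfl⟩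
    exact div_le_div₀ (norm_nonneg _) (le_of_abs_le (hT₀ x hx)) hc (hP₀' x hx)
  have hTu := (tendstoUniformlyOn_reApplyInnerSelf hT 1).mono sphere_subset_closedBall
  have hPu := (tendstoUniformlyOn_reApplyInnerSelf hP 1).mono sphere_subset_closedBall
  exact (hTu.div_of_abs_le_of_le hPu hT₀ hc hP₀').tendsto_sSup_image hbdd

end QuadraticForm

theorem stmt6_general
    {V : Type*} [NormedAddCommGroup V] [InnerProductSpace ℂ V] [CompleteSpace V]
    {M : Type*} [TopologicalSpace M]
    (P h : M → (V →L[ℂ] V))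
    (hPcont : Continuous P) (hhcont : Continuous h)
    (hPpos : ∀ z, (P z).IsPositive) (hPinv : ∀ z, IsUnit (P z)) :
    Continuous (fun z : M =>
      sSup {r : ℝ | ∃ v : V, (inner ℂ ((P z) v) v : ℂ).re = 1 ∧
        r = (inner ℂ ((h z) v) v : ℂ).re}) := by
  have hcoer : ∀ z, ∃ c > 0, ∀ x, c * ‖x‖ ^ 2 ≤ (P z).reApplyInnerSelf x := fun z =>
    (IsStrictlyPositive.iff_of_unital.2 ⟨(nonneg_iff_isPositive _).2 (hPpos z), hPinv z⟩)
      |>.exists_pos_mul_norm_sq_le_reApplyInnerSelf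
  have hset : ∀ z, {r : ℝ | ∃ v : V, (inner ℂ ((P z) v) v : ℂ).re = 1 ∧
      r = (inner ℂ ((h z) v) v : ℂ).re}
      = (fun x => (h z).reApplyInnerSelf x / (P z).reApplyInnerSelf x) '' sphere 0 1 := by
    intro z
    obtain ⟨c, hc, hcP⟩ := hcoer z
    exact (image_sphere_div_reApplyInnerSelf fun x hx =>
      (mul_pos hc (by positivity)).trans_le (hcP x)).symm
  simp only [hset]
  refine continuous_iff_continuousAt.2 fun z₀ => ?_
  obtain ⟨c, hc, hcP⟩ := hcoer z₀
  exact tendsto_sSup_image_sphere_div_reApplyInnerSelf (hhcont.tendsto z₀) (hPcont.tendsto z₀)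
    hc hcP

theorem stmt6
    {V : Type*} [NormedAddCommGroup V] [InnerProductSpace ℂ V] [CompleteSpace V]
    {M : Type*} [TopologicalSpace M]
    (P h : M → (V →L[ℂ] V))
    (hPcont : Continuous P) (hhcont : Continuous h)
    (hPpos : ∀ z, (P z).IsPositive) (hPinv : ∀ z, IsUnit (P z))
    (hself : ∀ z, IsSelfAdjoint (h z)) :
    Continuous (fun z : M =>
      sSup {r : ℝ | ∃ v : V, (inner ℂ ((P z) v) v : ℂ).re = 1 ∧
        r = (inner ℂ ((h z) v) v : ℂ).re}) :=
  stmt6_general P h hPcont hhcont hPpos hPinv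
end

section
/- Let V be a complex Hilbert space, Ω ⊆ ℂ open, h : Ω → End(V) a C² map into self-adjoint operators, and H : Ω → GL(V) holomorphic. Then for every v ∈ V, the Wirtinger derivative ∂²/∂z∂z̄ of the scalar function z ↦ ⟨H(z)*h(z)H(z) v, v⟩ equals ⟨H(z)* (𝓛h)(z) H(z) v, v⟩, where 𝓛h = h_{z z̄} − P_{z̄}P⁻¹h_z − h_{z̄}P⁻¹P_z + P_{z̄}P⁻¹ h P⁻¹ P_z and P = (H H*)⁻¹ (so that H*PH = 1). -/
open Complex ContinuousLinearMap

noncomputable def wder {E : Type*} [NormedAddCommGroup E] [NormedSpace ℂ E]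
    (f : ℂ → E) (z : ℂ) : E :=
  (2 : ℂ)⁻¹ • (fderiv ℝ f z 1 - Complex.I • fderiv ℝ f z Complex.I)

noncomputable def wderBar {E : Type*} [NormedAddCommGroup E] [NormedSpace ℂ E]
    (f : ℂ → E) (z : ℂ) : E :=
  (2 : ℂ)⁻¹ • (fderiv ℝ f z 1 + Complex.I • fderiv ℝ f z Complex.I)

/-! Since `H` is holomorphic, `∂(H*) = 0` and `∂̄H = 0`, so the Leibniz rule gives
`∂̄∂(H* h H) = H* h_{z z̄} H + H'* h_z H + H* h_z̄ H' + H'* h H'`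
(using `h_{z̄ z} = h_{z z̄}` for a `C²` map). Differentiating `P = (H H*)⁻¹` and using
`H* (H H*)⁻¹ H = 1` gives `P⁻¹ P_z H = -H'` and `H* P_z̄ P⁻¹ = -H'*`; substituted into
`H* (𝓛h) H` these produce the same four terms. Finally `T ↦ ⟪T v, v⟫` is conjugate-linear, so it
exchanges `∂` and `∂̄`, and `∂∂̄⟪(H* h H) v, v⟫ = ⟪∂̄∂(H* h H) v, v⟫`. -/

open Filter Topology

section Wirtinger

variable {E : Type*} [NormedAddCommGroup E] [NormedSpace ℂ E] {f g : ℂ → E} {z : ℂ}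

theorem Filter.EventuallyEq.wder_eq (hfg : f =ᶠ[𝓝 z] g) : wder f z = wder g z := by
  rw [wder, wder, hfg.fderiv_eq]

theorem Filter.EventuallyEq.wderBar_eq (hfg : f =ᶠ[𝓝 z] g) : wderBar f z = wderBar g z := by
  rw [wderBar, wderBar, hfg.fderiv_eq]

theorem DifferentiableAt.wder_eq_deriv (hf : DifferentiableAt ℂ f z) : wder f z = deriv f z := by
  rw [wder, (hf.hasDerivAt.hasFDerivAt.restrictScalars ℝ).fderiv]
  simp only [coe_restrictScalars', toSpanSingleton_apply, one_smul, smul_smul, I_mul_I]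
  module

theorem DifferentiableAt.wderBar_eq_zero (hf : DifferentiableAt ℂ f z) : wderBar f z = 0 := by
  rw [wderBar, (hf.hasDerivAt.hasFDerivAt.restrictScalars ℝ).fderiv]
  simp only [coe_restrictScalars', toSpanSingleton_apply, one_smul, smul_smul, I_mul_I]
  module

theorem wderBar_add (hf : DifferentiableAt ℝ f z) (hg : DifferentiableAt ℝ g z) :
    wderBar (fun w => f w + g w) z = wderBar f z + wderBar g z := by
  simp only [wderBar, fderiv_fun_add hf hg, add_apply]
  module

theorem HasFDerivAt.hasFDerivAt_wder {D : ℂ →L[ℝ] ℂ →L[ℝ] E}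
    (hD : HasFDerivAt (fderiv ℝ f) D z) :
    HasFDerivAt (wder f)
      ((2 : ℂ)⁻¹ • ((apply ℝ E (1 : ℂ)).comp D - I • (apply ℝ E I).comp D)) z :=
  (((apply ℝ E (1 : ℂ)).hasFDerivAt.comp z hD).sub
    (((apply ℝ E I).hasFDerivAt.comp z hD).const_smul I)).const_smul _

theorem HasFDerivAt.hasFDerivAt_wderBar {D : ℂ →L[ℝ] ℂ →L[ℝ] E}
    (hD : HasFDerivAt (fderiv ℝ f) D z) :
    HasFDerivAt (wderBar f)
      ((2 : ℂ)⁻¹ • ((apply ℝ E (1 : ℂ)).comp D + I • (apply ℝ E I).comp D)) z :=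
  (((apply ℝ E (1 : ℂ)).hasFDerivAt.comp z hD).add
    (((apply ℝ E I).hasFDerivAt.comp z hD).const_smul I)).const_smul _

theorem wderBar_wder_eq_wder_wderBar (hf : ContDiffAt ℝ 2 f z) :
    wderBar (wder f) z = wder (wderBar f) z := by
  have hD : HasFDerivAt (fderiv ℝ f) (fderiv ℝ (fderiv ℝ f) z) z :=
    ((hf.fderiv_right (m := 1) le_rfl).differentiableAt one_ne_zero).hasFDerivAt
  have hsymm := hf.isSymmSndFDerivAt (by simp [minSmoothness_of_isRCLikeNormedField]) 1 I
  rw [wderBar, wder, hD.hasFDerivAt_wder.fderiv, hD.hasFDerivAt_wderBar.fderiv]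
  simp only [smul_apply, sub_apply, add_apply, coe_comp, Function.comp_apply, apply_apply, hsymm]
  module

end Wirtinger

section ConjLinear

variable {E F : Type*} [NormedAddCommGroup E] [NormedSpace ℂ E] [NormedAddCommGroup F]
  [NormedSpace ℂ F] {f : ℂ → E} {z : ℂ}

def ContinuousLinearMap.conjRestrictScalars (L : E →L⋆[ℂ] F) : E →L[ℝ] F where
  toFun := L
  map_add' := L.map_add
  map_smul' r x := by
    rw [← Complex.coe_smul, L.map_smulₛₗ, conj_ofReal, Complex.coe_smul, RingHom.id_apply]
  cont := L.continuous

@[simp]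
theorem ContinuousLinearMap.conjRestrictScalars_apply (L : E →L⋆[ℂ] F) (x : E) :
    L.conjRestrictScalars x = L x := rfl

theorem DifferentiableAt.conjLinear_comp (L : E →L⋆[ℂ] F) (hf : DifferentiableAt ℝ f z) :
    DifferentiableAt ℝ (fun w => L (f w)) z :=
  L.conjRestrictScalars.differentiableAt.comp z hf

theorem wder_conjLinear_comp (L : E →L⋆[ℂ] F) (hf : DifferentiableAt ℝ f z) :
    wder (fun w => L (f w)) z = L (wderBar f z) := by
  have hLf : HasFDerivAt (fun w => L (f w)) (L.conjRestrictScalars.comp (fderiv ℝ f z)) z :=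
    L.conjRestrictScalars.hasFDerivAt.comp z hf.hasFDerivAt
  rw [wder, wderBar, hLf.fderiv]
  simp only [comp_apply, conjRestrictScalars_apply, smul_add, map_add, map_smulₛₗ, map_inv₀,
    map_ofNat, conj_I, neg_smul, smul_neg]
  module

theorem wderBar_conjLinear_comp (L : E →L⋆[ℂ] F) (hf : DifferentiableAt ℝ f z) :
    wderBar (fun w => L (f w)) z = L (wder f z) := by
  have hLf : HasFDerivAt (fun w => L (f w)) (L.conjRestrictScalars.comp (fderiv ℝ f z)) z :=
    L.conjRestrictScalars.hasFDerivAt.comp z hf.hasFDerivAt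
  rw [wder, wderBar, hLf.fderiv]
  simp only [comp_apply, conjRestrictScalars_apply, smul_add, map_smulₛₗ, map_inv₀, map_ofNat,
    map_sub, conj_I, neg_smul, sub_neg_eq_add]

theorem wder_wderBar_conjLinear_comp (L : E →L⋆[ℂ] F)
    (hf : ∀ᶠ w in 𝓝 z, DifferentiableAt ℝ f w) (hf' : DifferentiableAt ℝ (wder f) z) :
    wder (wderBar fun w => L (f w)) z = L (wderBar (wder f) z) := by
  have hev : wderBar (fun w => L (f w)) =ᶠ[𝓝 z] fun w => L (wder f w) :=
    hf.mono fun w hw => wderBar_conjLinear_comp L hw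
  rw [hev.wder_eq]
  exact wder_conjLinear_comp L hf'

end ConjLinear

section NormedAlgebra

variable {A : Type*} [NormedRing A] [NormedAlgebra ℂ A] {a b c : ℂ → A} {z : ℂ}

theorem wder_mul (ha : DifferentiableAt ℝ a z) (hb : DifferentiableAt ℝ b z) :
    wder (fun w => a w * b w) z = wder a z * b z + a z * wder b z := by
  simp only [wder, fderiv_fun_mul' ha hb, add_apply, smul_apply, smul_eq_mul,
    op_smul_eq_mul, smul_sub, smul_add, sub_mul, mul_sub, smul_mul_assoc,
    mul_smul_comm]
  module

theorem wderBar_mul (ha : DifferentiableAt ℝ a z) (hb : DifferentiableAt ℝ b z) :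
    wderBar (fun w => a w * b w) z = wderBar a z * b z + a z * wderBar b z := by
  simp only [wderBar, fderiv_fun_mul' ha hb, add_apply, smul_apply, smul_eq_mul,
    op_smul_eq_mul, smul_add, add_mul, mul_add, smul_mul_assoc, mul_smul_comm]
  module

theorem wder_mul_mul (ha : DifferentiableAt ℝ a z) (hb : DifferentiableAt ℝ b z)
    (hc : DifferentiableAt ℝ c z) :
    wder (fun w => a w * b w * c w) z
      = wder a z * b z * c z + a z * wder b z * c z + a z * b z * wder c z := by
  rw [wder_mul (ha.fun_mul hb) hc, wder_mul ha hb, add_mul]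

theorem wderBar_mul_mul (ha : DifferentiableAt ℝ a z) (hb : DifferentiableAt ℝ b z)
    (hc : DifferentiableAt ℝ c z) :
    wderBar (fun w => a w * b w * c w) z
      = wderBar a z * b z * c z + a z * wderBar b z * c z + a z * b z * wderBar c z := by
  rw [wderBar_mul (ha.fun_mul hb) hc, wderBar_mul ha hb, add_mul]

variable [HasSummableGeomSeries A]

theorem wder_ringInverse (ha : DifferentiableAt ℝ a z) (hu : IsUnit (a z)) :
    wder (fun w => Ring.inverse (a w)) z
      = -(Ring.inverse (a z) * wder a z * Ring.inverse (a z)) := by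
  obtain ⟨u, hu⟩ := hu
  have hinv : HasFDerivAt (fun w => Ring.inverse (a w))
      ((-mulLeftRight ℝ A ↑u⁻¹ ↑u⁻¹).comp (fderiv ℝ a z)) z :=
    (hu ▸ hasFDerivAt_ringInverse u).comp z ha.hasFDerivAt
  rw [wder, wder, hinv.fderiv, ← hu, Ring.inverse_unit]
  simp only [coe_comp, Function.comp_apply, neg_apply, mulLeftRight_apply, smul_sub, sub_mul,
    mul_sub, smul_mul_assoc, mul_smul_comm]
  module

theorem wderBar_ringInverse (ha : DifferentiableAt ℝ a z) (hu : IsUnit (a z)) :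
    wderBar (fun w => Ring.inverse (a w)) z
      = -(Ring.inverse (a z) * wderBar a z * Ring.inverse (a z)) := by
  obtain ⟨u, hu⟩ := hu
  have hinv : HasFDerivAt (fun w => Ring.inverse (a w))
      ((-mulLeftRight ℝ A ↑u⁻¹ ↑u⁻¹).comp (fderiv ℝ a z)) z :=
    (hu ▸ hasFDerivAt_ringInverse u).comp z ha.hasFDerivAt
  rw [wderBar, wderBar, hinv.fderiv, ← hu, Ring.inverse_unit]
  simp only [coe_comp, Function.comp_apply, neg_apply, mulLeftRight_apply, smul_add, add_mul,
    mul_add, smul_mul_assoc, mul_smul_comm]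
  module

end NormedAlgebra

theorem Ring.mul_inverse_mul_mul_eq_one {M₀ : Type*} [MonoidWithZero M₀] {a b : M₀}
    (ha : IsUnit a) (hb : IsUnit b) : b * Ring.inverse (a * b) * a = 1 := by
  rw [Ring.inverse_mul (Or.inl ha), ← mul_assoc, Ring.mul_inverse_cancel b hb, one_mul,
    Ring.inverse_mul_cancel a ha]

section Adjoint

variable {E F : Type*} [NormedAddCommGroup E] [InnerProductSpace ℂ E] [CompleteSpace E]
  [NormedAddCommGroup F] [InnerProductSpace ℂ F] [CompleteSpace F] {H : ℂ → E →L[ℂ] F}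
  {z : ℂ}

theorem DifferentiableAt.differentiableAt_adjoint (hH : DifferentiableAt ℂ H z) :
    DifferentiableAt ℝ (fun w => adjoint (H w)) z :=
  (hH.restrictScalars ℝ).conjLinear_comp adjoint.toContinuousLinearEquiv.toContinuousLinearMap

theorem DifferentiableAt.wder_adjoint_eq_zero (hH : DifferentiableAt ℂ H z) :
    wder (fun w => adjoint (H w)) z = 0 := by
  simpa [hH.wderBar_eq_zero] using
    wder_conjLinear_comp adjoint.toContinuousLinearEquiv.toContinuousLinearMap
      (hH.restrictScalars ℝ)

theorem DifferentiableAt.wderBar_adjoint (hH : DifferentiableAt ℂ H z) :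
    wderBar (fun w => adjoint (H w)) z = adjoint (deriv H z) := by
  simpa [hH.wder_eq_deriv] using
    wderBar_conjLinear_comp adjoint.toContinuousLinearEquiv.toContinuousLinearMap
      (hH.restrictScalars ℝ)

end Adjoint

section Operator

variable {V : Type*} [NormedAddCommGroup V] [InnerProductSpace ℂ V] [CompleteSpace V]
  {H h P : ℂ → V →L[ℂ] V} {z : ℂ}

theorem wder_adjoint_mul_mul (hH : DifferentiableAt ℂ H z) (hh : DifferentiableAt ℝ h z) :
    wder (fun w => adjoint (H w) * h w * H w) z
      = adjoint (H z) * wder h z * H z + adjoint (H z) * h z * deriv H z := by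
  rw [wder_mul_mul hH.differentiableAt_adjoint hh (hH.restrictScalars ℝ), hH.wder_adjoint_eq_zero,
    hH.wder_eq_deriv, zero_mul, zero_mul, zero_add]

theorem wder_wderBar_inner_adjoint_mul_mul (hH : ∀ᶠ w in 𝓝 z, DifferentiableAt ℂ H w)
    (hh : ContDiffAt ℝ 2 h z) (v : V) :
    wder (wderBar fun w => inner ℂ ((adjoint (H w) * h w * H w) v) v) z
      = inner ℂ ((adjoint (H z) * wder (wderBar h) z * H z
          + adjoint (deriv H z) * wder h z * H z + adjoint (H z) * wderBar h z * deriv H z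
          + adjoint (deriv H z) * h z * deriv H z) v) v := by
  have hHz : DifferentiableAt ℂ H z := hH.self_of_nhds
  have hH' : DifferentiableAt ℂ (deriv H) z :=
    (Complex.analyticAt_iff_eventually_differentiableAt.mpr hH).deriv.differentiableAt
  have hh' : ∀ᶠ w in 𝓝 z, DifferentiableAt ℝ h w :=
    (hh.eventually (by simp)).mono fun w hw => hw.differentiableAt (by simp)
  have hD : HasFDerivAt (fderiv ℝ h) (fderiv ℝ (fderiv ℝ h) z) z :=
    ((hh.fderiv_right (m := 1) le_rfl).differentiableAt one_ne_zero).hasFDerivAt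
  have hwh : DifferentiableAt ℝ (wder h) z := hD.hasFDerivAt_wder.differentiableAt
  set g := fun w => adjoint (H w) * wder h w * H w + adjoint (H w) * h w * deriv H w
  have hg : wder (fun w => adjoint (H w) * h w * H w) =ᶠ[𝓝 z] g :=
    (hH.and hh').mono fun w ⟨hHw, hhw⟩ => wder_adjoint_mul_mul hHw hhw
  have hg1 := hHz.differentiableAt_adjoint.fun_mul hwh |>.fun_mul (hHz.restrictScalars ℝ)
  have hg2 := hHz.differentiableAt_adjoint.fun_mul hh'.self_of_nhds
    |>.fun_mul (hH'.restrictScalars ℝ)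
  have hφ := wder_wderBar_conjLinear_comp ((innerSLFlip ℂ v).comp (apply ℂ V v))
    ((hH.and hh').mono fun w ⟨hHw, hhw⟩ =>
      (hHw.differentiableAt_adjoint.fun_mul hhw).fun_mul (hHw.restrictScalars ℝ))
    (hg.differentiableAt_iff.mpr (hg1.fun_add hg2))
  simp only [coe_comp, Function.comp_apply, apply_apply, innerSLFlip_apply_apply] at hφ
  rw [hφ, hg.wderBar_eq, wderBar_add hg1 hg2, wderBar_mul_mul hHz.differentiableAt_adjoint hwh
    (hHz.restrictScalars ℝ), wderBar_mul_mul hHz.differentiableAt_adjoint hh'.self_of_nhds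
    (hH'.restrictScalars ℝ), hHz.wderBar_adjoint, hHz.wderBar_eq_zero, hH'.wderBar_eq_zero,
    wderBar_wder_eq_wder_wderBar hh]
  congr 2
  simp only [mul_zero, add_zero]
  abel

theorem isUnit_mul_adjoint {T : V →L[ℂ] V} (hT : IsUnit T) : IsUnit (T * adjoint T) :=
  hT.mul (star_eq_adjoint T ▸ hT.star)

theorem inverse_mul_wder_mul_eq_neg_deriv (hH : DifferentiableAt ℂ H z) (hu : IsUnit (H z))
    (hP : P = fun w => Ring.inverse (H w * adjoint (H w))) :
    Ring.inverse (P z) * wder P z * H z = -deriv H z := by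
  have hq := isUnit_mul_adjoint hu
  have hcancel := Ring.mul_inverse_mul_mul_eq_one hu (star_eq_adjoint (H z) ▸ hu.star)
  subst hP
  rw [wder_ringInverse ((hH.restrictScalars ℝ).fun_mul hH.differentiableAt_adjoint) hq,
    wder_mul (hH.restrictScalars ℝ) hH.differentiableAt_adjoint, hH.wder_eq_deriv,
    hH.wder_adjoint_eq_zero, Ring.inverse_inverse hq, mul_zero, add_zero]
  simp only [mul_neg, neg_mul, neg_inj, ← mul_assoc, Ring.mul_inverse_cancel _ hq, one_mul]
  simp only [mul_assoc] at hcancel ⊢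
  rw [hcancel, mul_one]

theorem adjoint_mul_wderBar_mul_inverse_eq_neg_adjoint_deriv (hH : DifferentiableAt ℂ H z)
    (hu : IsUnit (H z)) (hP : P = fun w => Ring.inverse (H w * adjoint (H w))) :
    adjoint (H z) * wderBar P z * Ring.inverse (P z) = -adjoint (deriv H z) := by
  have hq := isUnit_mul_adjoint hu
  have hcancel := Ring.mul_inverse_mul_mul_eq_one hu (star_eq_adjoint (H z) ▸ hu.star)
  subst hP
  rw [wderBar_ringInverse ((hH.restrictScalars ℝ).fun_mul hH.differentiableAt_adjoint) hq,
    wderBar_mul (hH.restrictScalars ℝ) hH.differentiableAt_adjoint, hH.wderBar_eq_zero,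
    hH.wderBar_adjoint, Ring.inverse_inverse hq, zero_mul, zero_add]
  simp only [mul_neg, neg_mul, neg_inj, mul_assoc, Ring.inverse_mul_cancel _ hq, mul_one]
  simp only [← mul_assoc] at hcancel ⊢
  rw [hcancel, one_mul]

theorem adjoint_mul_sub_sub_add_mul (hH : DifferentiableAt ℂ H z) (hu : IsUnit (H z))
    (hP : P = fun w => Ring.inverse (H w * adjoint (H w))) (X Y Z k : V →L[ℂ] V) :
    adjoint (H z) * (X - wderBar P z * Ring.inverse (P z) * Y - Z * Ring.inverse (P z) * wder P z
        + wderBar P z * Ring.inverse (P z) * k * Ring.inverse (P z) * wder P z) * H z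
      = adjoint (H z) * X * H z + adjoint (deriv H z) * Y * H z + adjoint (H z) * Z * deriv H z
        + adjoint (deriv H z) * k * deriv H z := by
  have hA := adjoint_mul_wderBar_mul_inverse_eq_neg_adjoint_deriv hH hu hP
  have hB := inverse_mul_wder_mul_eq_neg_deriv hH hu hP
  set A := wderBar P z
  set B := wder P z
  set q := Ring.inverse (P z)
  calc adjoint (H z) * (X - A * q * Y - Z * q * B + A * q * k * q * B) * H z
      = adjoint (H z) * X * H z - (adjoint (H z) * A * q) * Y * H z
        - adjoint (H z) * Z * (q * B * H z) + (adjoint (H z) * A * q) * k * (q * B * H z) := by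
        noncomm_ring
    _ = _ := by rw [hA, hB]; noncomm_ring

end Operator

theorem stmt8_general
    {V : Type*} [NormedAddCommGroup V] [InnerProductSpace ℂ V] [CompleteSpace V]
    (Ω : Set ℂ) (hΩ : IsOpen Ω)
    (h : ℂ → (V →L[ℂ] V)) (hh2 : ContDiff ℝ 2 h)
    (H : ℂ → (V →L[ℂ] V)) (hH : DifferentiableOn ℂ H Ω)
    (hHinv : ∀ z ∈ Ω, IsUnit (H z))
    (P : ℂ → (V →L[ℂ] V))
    (hP : ∀ z, P z = Ring.inverse (H z * ContinuousLinearMap.adjoint (H z)))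
    (Lh : ℂ → (V →L[ℂ] V))
    (hLh : ∀ z, Lh z =
      wder (wderBar h) z
        - wderBar P z * Ring.inverse (P z) * wder h z
        - wderBar h z * Ring.inverse (P z) * wder P z
        + wderBar P z * Ring.inverse (P z) * h z * Ring.inverse (P z) * wder P z) :
    ∀ z ∈ Ω, ∀ v : V,
      wder (wderBar (fun w : ℂ =>
          (inner ℂ ((ContinuousLinearMap.adjoint (H w) * h w * H w) v) v : ℂ))) z
        = (inner ℂ ((ContinuousLinearMap.adjoint (H z) * Lh z * H z) v) v : ℂ) := by
  intro z hz v
  have hHz : ∀ᶠ w in 𝓝 z, DifferentiableAt ℂ H w :=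
    eventually_of_mem (hΩ.mem_nhds hz) fun w hw => hH.differentiableAt (hΩ.mem_nhds hw)
  rw [wder_wderBar_inner_adjoint_mul_mul hHz hh2.contDiffAt v, hLh z,
    adjoint_mul_sub_sub_add_mul hHz.self_of_nhds (hHinv z hz) (funext hP)]

theorem stmt8
    {V : Type*} [NormedAddCommGroup V] [InnerProductSpace ℂ V] [CompleteSpace V]
    (Ω : Set ℂ) (hΩ : IsOpen Ω)
    (h : ℂ → (V →L[ℂ] V)) (hh2 : ContDiff ℝ 2 h) (hhself : ∀ z, IsSelfAdjoint (h z))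
    (H : ℂ → (V →L[ℂ] V)) (hH : DifferentiableOn ℂ H Ω)
    (hHinv : ∀ z ∈ Ω, IsUnit (H z))
    (P : ℂ → (V →L[ℂ] V))
    (hP : ∀ z, P z = Ring.inverse (H z * ContinuousLinearMap.adjoint (H z)))
    (Lh : ℂ → (V →L[ℂ] V))
    (hLh : ∀ z, Lh z =
      wder (wderBar h) z
        - wderBar P z * Ring.inverse (P z) * wder h z
        - wderBar h z * Ring.inverse (P z) * wder P z
        + wderBar P z * Ring.inverse (P z) * h z * Ring.inverse (P z) * wder P z) :
    ∀ z ∈ Ω, ∀ v : V,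
      wder (wderBar (fun w : ℂ =>
          (inner ℂ ((ContinuousLinearMap.adjoint (H w) * h w * H w) v) v : ℂ))) z
        = (inner ℂ ((ContinuousLinearMap.adjoint (H z) * Lh z * H z) v) v : ℂ) :=
  stmt8_general Ω hΩ h hh2 H hH hHinv P hP Lh hLh
end

section
/- Let B and W be Banach spaces and (L_t)_{t∈[0,1]} a family of bounded linear operators from B to W such that t ↦ L_t is continuous in operator norm and there is a constant C with ‖x‖ ≤ C‖L_t x‖ for all x ∈ B and all t ∈ [0,1]. Then L_1 is surjective if and only if L_0 is surjective. -/
/-!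
The uniform bound makes every `L t` injective with closed range. The set of `t` with `L t`
surjective is therefore the preimage of the open set of invertible operators (open mapping
theorem). It is also closed: if surjective `S n → T` all satisfy the bound, preimages `x n` of `w`
under `S n` have `‖x n‖ ≤ C * ‖w‖`, so `T (x n) → w` and `w` lies in the closed range of `T`.
Connectedness of `[0, 1]` concludes.
-/

open Function Filter Topology

namespace ContinuousLinearMap

variable {𝕜 E F : Type*} [NontriviallyNormedField 𝕜] [NormedAddCommGroup E] [NormedSpace 𝕜 E]
  [NormedAddCommGroup F] [NormedSpace 𝕜 F]

theorem antilipschitzWith_toNNReal_of_bound {T : E →L[𝕜] F} {C : ℝ}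
    (h : ∀ x, ‖x‖ ≤ C * ‖T x‖) : AntilipschitzWith C.toNNReal T :=
  T.antilipschitz_of_bound fun x => (h x).trans (by gcongr; exact Real.le_coe_toNNReal C)

theorem isOpen_setOf_bijective [CompleteSpace E] [CompleteSpace F] :
    IsOpen {T : E →L[𝕜] F | Bijective T} := by
  convert ContinuousLinearEquiv.isOpen (𝕜 := 𝕜) (E := E) (F := F) using 1
  ext T
  refine ⟨fun hT => ⟨.ofBijective T (LinearMap.ker_eq_bot.2 hT.1) (LinearMap.range_eq_top.2 hT.2),
    ContinuousLinearEquiv.coe_ofBijective _ _ _⟩, ?_⟩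
  rintro ⟨e, rfl⟩
  exact e.bijective

theorem isClosed_setOf_bound (C : ℝ) : IsClosed {T : E →L[𝕜] F | ∀ x, ‖x‖ ≤ C * ‖T x‖} := by
  simp only [Set.ofPred_forall]
  exact isClosed_iInter fun x =>
    isClosed_le continuous_const (continuous_const.mul (continuous_eval_const x).norm)

theorem isClosed_setOf_surjective_and_bound [CompleteSpace E] (C : ℝ) :
    IsClosed {T : E →L[𝕜] F | Surjective T ∧ ∀ x, ‖x‖ ≤ C * ‖T x‖} := by
  refine closure_subset_iff_isClosed.1 fun T hT => ?_
  have hbound : ∀ x, ‖x‖ ≤ C * ‖T x‖ :=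
    (isClosed_setOf_bound C).closure_subset (closure_mono (fun _ h => h.2) hT)
  refine ⟨fun w => ?_, hbound⟩
  obtain ⟨S, hSK, hST⟩ := mem_closure_iff_seq_limit.1 hT
  choose x hx using fun n => (hSK n).1 w
  have hTx : Tendsto (fun n => T (x n)) atTop (𝓝 w) := by
    have hS : Tendsto (fun n => ‖T - S n‖ * (C * ‖w‖)) atTop (𝓝 0) := by
      simpa [norm_sub_rev] using (tendsto_iff_norm_sub_tendsto_zero.1 hST).mul_const (C * ‖w‖)
    refine tendsto_iff_norm_sub_tendsto_zero.2
      (squeeze_zero (fun n => norm_nonneg _) (fun n => ?_) hS)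
    calc ‖T (x n) - w‖ = ‖(T - S n) (x n)‖ := by rw [sub_apply, hx]
      _ ≤ ‖T - S n‖ * ‖x n‖ := le_opNorm _ _
      _ ≤ ‖T - S n‖ * (C * ‖w‖) := by
        gcongr
        simpa [hx] using (hSK n).2 (x n)
  have hclosed : IsClosed (Set.range T) :=
    (antilipschitzWith_toNNReal_of_bound hbound).isClosed_range T.uniformContinuous
  exact hclosed.mem_of_tendsto hTx (Eventually.of_forall fun n => Set.mem_range_self _)

theorem surjective_iff_of_continuous_of_bound [CompleteSpace E] [CompleteSpace F]
    {X : Type*} [TopologicalSpace X] [PreconnectedSpace X] {L : X → E →L[𝕜] F}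
    (hL : Continuous L) {C : ℝ} (hC : ∀ u x, ‖x‖ ≤ C * ‖L u x‖) (u v : X) :
    Surjective (L u) ↔ Surjective (L v) := by
  have hopen : IsOpen {u | Surjective (L u)} := by
    convert isOpen_setOf_bijective.preimage hL using 1
    ext u
    exact (and_iff_right (antilipschitzWith_toNNReal_of_bound (hC u)).injective).symm
  have hclosed : IsClosed {u | Surjective (L u)} := by
    convert (isClosed_setOf_surjective_and_bound C).preimage hL using 1
    ext u
    exact (and_iff_left (hC u)).symm
  rcases isClopen_iff.1 ⟨hclosed, hopen⟩ with h | h <;>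
    simp only [Set.ext_iff, Set.mem_ofPred_eq] at h <;> simp [h]

end ContinuousLinearMap

theorem stmt12
    {B W : Type*} [NormedAddCommGroup B] [NormedSpace ℝ B] [CompleteSpace B]
    [NormedAddCommGroup W] [NormedSpace ℝ W] [CompleteSpace W]
    (L : ℝ → (B →L[ℝ] W))
    (hcont : ContinuousOn L (Set.Icc 0 1))
    (C : ℝ)
    (hest : ∀ t ∈ Set.Icc (0 : ℝ) 1, ∀ x : B, ‖x‖ ≤ C * ‖L t x‖) :
    Function.Surjective (L 1) ↔ Function.Surjective (L 0) :=
  ContinuousLinearMap.surjective_iff_of_continuous_of_bound hcont.domRestrict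
    (fun u => hest u u.2) ⟨1, by norm_num⟩ ⟨0, by norm_num⟩
end
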